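/- Let q ≥ 3 and let ∇ ∈ ℝ^{p×n} be the discrete gradient operator of the 3-dimensional regular grid graph on V = {0,…,q−1}³, with n = q³ and p = 3q²(q−1). Let ℓ be an integer with 54 < ℓ ≤ p and let m ∈ ℕ satisfy m ≥ n − (1/3)(ℓ + (3ℓ²)^{1/3} + 2(ℓ/3)^{1/3} − 2). Then κ_∇(ℓ) ≤ m; that is, the number of measurements m meets the necessary and sufficient condition of the known-cosupport uniqueness criterion. -/

import Mathlib

/-- Base-`q` encoding of a grid point, used to orient the edges of the grid graph. -/
def enc (q d : ℕ) (v : Fin d → Fin q) : ℕ := ∑ i : Fin d, q ^ (i : ℕ) * (v i : ℕ)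

/-- The (oriented) edges of the regular grid graph on `{0,…,q−1}^d`: pairs of vertices at
ℓ1-distance 1, canonically oriented. They index the rows of the discrete gradient. -/
abbrev OEdge (q d : ℕ) : Type :=
  {e : (Fin d → Fin q) × (Fin d → Fin q) //
    (∑ i, |(e.1 i : ℤ) - (e.2 i : ℤ)|) = 1 ∧ enc q d e.1 < enc q d e.2}

/-- The discrete gradient operator of the regular grid graph: one row per edge
`e = (v₁, v₂)`, with entry `−1` in the column of `v₁`, `+1` in the column of `v₂`. -/
def grad (q d : ℕ) : Matrix (OEdge q d) (Fin d → Fin q) ℝ :=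
  Matrix.of fun e v => if v = e.1.2 then 1 else if v = e.1.1 then -1 else 0

/-- `W_Λ`: the nullspace of the rows of the discrete gradient indexed by `Λ`. -/
noncomputable def Wgrad (q d : ℕ) (Λ : Finset (OEdge q d)) :
    Submodule ℝ ((Fin d → Fin q) → ℝ) :=
  ⨅ e ∈ Λ, LinearMap.ker
    ((LinearMap.proj e : (OEdge q d → ℝ) →ₗ[ℝ] ℝ) ∘ₗ (grad q d).mulVecLin)

/-- `κ_∇(ℓ) = max{dim W_Λ : Λ ⊆ E, |Λ| ≥ ℓ}` for the discrete gradient of the grid. -/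
noncomputable def kappaGrad (q d ℓ : ℕ) : ℕ :=
  (Finset.univ.filter (fun Λ : Finset (OEdge q d) => ℓ ≤ Λ.card)).sup
    (fun Λ => Module.finrank ℝ (Wgrad q d Λ))

/-!
`W_Λ` is the kernel of the Laplacian of the graph `(V, Λ)`, so its dimension is the number `c` of
connected components of that graph. A set `S` of `k` grid vertices spans at most
`G(k) = 3k - 3k^{2/3}` edges: in each direction `i` there are at most `k - |π_i S|` of them, and the
discrete Loomis–Whitney inequality `|S|² ≤ |π₀ S| |π₁ S| |π₂ S|` with AM–GM gives
`Σ |π_i S| ≥ 3k^{2/3}`. Concavity of `x ↦ x^{2/3}` yields `G(a) + G(b) ≤ G(a + b - 1)`, so summing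
over the components `|Λ| ≤ G(n - c + 1)`. Writing `ℓ = 3t³`, the threshold
`F = t³ + t² + 2t/3 - 2/3` satisfies `G(F) < ℓ`, and `G` increases on `[1, ∞)`; hence
`n - c + 1 > F`, i.e. `c ≤ m`.
-/

open Finset

-- At `x = s³` this is `3s²(s - 1)`, the number of edges of a cube of side `s` in the grid.
noncomputable def gridEdgeBound (x : ℝ) : ℝ := 3 * x - 3 * x ^ ((2 : ℝ) / 3)

theorem ConcaveOn.map_add_map_add_sub_le {s : Set ℝ} {f : ℝ → ℝ} (hf : ConcaveOn ℝ s f)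
    {x a b : ℝ} (hx : x ∈ s) (hy : a + b - x ∈ s) (hxa : x ≤ a) (hxb : x ≤ b) :
    f x + f (a + b - x) ≤ f a + f b := by
  rcases hxa.eq_or_lt with rfl | hxa
  · simp
  have hyx : 0 < a + b - x - x := by linarith
  set μ := (a - x) / (a + b - x - x) with hμ
  have hμ0 : 0 ≤ μ := div_nonneg (by linarith) hyx.le
  have hμ1 : μ ≤ 1 := div_le_one_of_le₀ (by linarith) hyx.le
  have ha := hf.2 hx hy (sub_nonneg.2 hμ1) hμ0 (sub_add_cancel 1 μ)
  have hb := hf.2 hx hy hμ0 (sub_nonneg.2 hμ1) (add_sub_cancel μ 1)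
  have ea : (1 - μ) • x + μ • (a + b - x) = a := by
    simp only [smul_eq_mul, hμ]; field_simp; ring
  have eb : μ • x + (1 - μ) • (a + b - x) = b := by
    simp only [smul_eq_mul, hμ]; field_simp; ring
  rw [ea] at ha
  rw [eb] at hb
  simp only [smul_eq_mul] at ha hb
  linarith

theorem gridEdgeBound_add_le {a b : ℝ} (ha : 1 ≤ a) (hb : 1 ≤ b) :
    gridEdgeBound a + gridEdgeBound b ≤ gridEdgeBound (a + b - 1) := by
  have := (Real.concaveOn_rpow (p := 2 / 3) (by norm_num) (by norm_num)).map_add_map_add_sub_le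
    (x := 1) (Set.mem_Ici.2 zero_le_one) (Set.mem_Ici.2 (by linarith)) ha hb
  simp only [Real.one_rpow] at this
  simp only [gridEdgeBound]
  linarith

theorem gridEdgeBound_monotoneOn : MonotoneOn gridEdgeBound (Set.Ici 1) := by
  have hfactor : ∀ x : ℝ, 0 ≤ x →
      gridEdgeBound x = 3 * x ^ ((2 : ℝ) / 3) * (x ^ ((1 : ℝ) / 3) - 1) := by
    intro x hx
    rw [gridEdgeBound, mul_sub, mul_assoc, ← Real.rpow_add' hx (by norm_num)]
    norm_num
  intro x (hx : 1 ≤ x) y (hy : 1 ≤ y) hxy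
  rw [hfactor x (by linarith), hfactor y (by linarith)]
  have : 1 ≤ x ^ ((1 : ℝ) / 3) := Real.one_le_rpow hx (by norm_num)
  gcongr

theorem sum_le_gridEdgeBound {ι : Type*} (s : Finset ι) {k e : ι → ℝ}
    (hk : ∀ i ∈ s, 1 ≤ k i) (he : ∀ i ∈ s, e i ≤ gridEdgeBound (k i)) :
    ∑ i ∈ s, e i ≤ gridEdgeBound (∑ i ∈ s, (k i - 1) + 1) := by
  induction s using Finset.cons_induction with
  | empty => simp [gridEdgeBound]
  | cons a s has ih =>
    simp only [forall_mem_cons] at hk he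
    have hsum : 0 ≤ ∑ i ∈ s, (k i - 1) := sum_nonneg fun i hi => sub_nonneg.2 (hk.2 i hi)
    calc ∑ i ∈ cons a s has, e i = e a + ∑ i ∈ s, e i := sum_cons has
      _ ≤ gridEdgeBound (k a) + gridEdgeBound (∑ i ∈ s, (k i - 1) + 1) :=
        add_le_add he.1 (ih hk.2 he.2)
      _ ≤ gridEdgeBound (k a + (∑ i ∈ s, (k i - 1) + 1) - 1) :=
        gridEdgeBound_add_le hk.1 (by linarith)
      _ = gridEdgeBound (∑ i ∈ cons a s has, (k i - 1) + 1) := by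
        rw [sum_cons]; ring_nf

theorem gridEdgeBound_lt {t : ℝ} (ht : 1 ≤ t) :
    gridEdgeBound (t ^ 3 + t ^ 2 + 2 / 3 * t - 2 / 3) < 3 * t ^ 3 := by
  set F := t ^ 3 + t ^ 2 + 2 / 3 * t - 2 / 3 with hF_def
  have hF : 0 ≤ F := by nlinarith
  have hcube : (F ^ ((2 : ℝ) / 3)) ^ 3 = F ^ 2 := by
    rw [← Real.rpow_natCast, ← Real.rpow_mul hF]
    norm_num
  have key : 3 * t ^ 2 + 2 * t - 2 < 3 * F ^ ((2 : ℝ) / 3) := by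
    refine lt_of_pow_lt_pow_left₀ 3 (by positivity) ?_
    rw [mul_pow, hcube, hF_def]
    -- `27 F² - (3t² + 2t - 2)³ = 81t⁴ + 64t³ - 36t² - 48t + 20`
    nlinarith [pow_le_pow_left₀ zero_le_one ht 4, pow_le_pow_left₀ zero_le_one ht 3]
  rw [gridEdgeBound]
  linarith

theorem gridEdgeBound_threshold_lt {x : ℝ} (hx : 3 ≤ x) :
    gridEdgeBound ((1 / 3) * (x + (3 * x ^ 2) ^ ((1 : ℝ) / 3) +
      2 * (x / 3) ^ ((1 : ℝ) / 3) - 2)) < x := by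
  have hx0 : 0 ≤ x / 3 := by positivity
  set t := (x / 3) ^ ((1 : ℝ) / 3) with ht
  have hx3 : x = 3 * t ^ 3 := by
    rw [ht, ← Real.rpow_natCast, ← Real.rpow_mul hx0]
    norm_num
    ring
  have hsq : (3 * x ^ 2) ^ ((1 : ℝ) / 3) = 3 * t ^ 2 := by
    rw [show 3 * x ^ 2 = (3 * t ^ 2) ^ 3 by rw [hx3]; ring, ← Real.rpow_natCast,
      ← Real.rpow_mul (by positivity)]
    norm_num
  have ht1 : 1 ≤ t := Real.one_le_rpow (by linarith) (by norm_num)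
  rw [hsq, show 1 / 3 * (x + 3 * t ^ 2 + 2 * t - 2) = t ^ 3 + t ^ 2 + 2 / 3 * t - 2 / 3 by
    rw [hx3]; ring]
  calc _ < 3 * t ^ 3 := gridEdgeBound_lt ht1
    _ = x := hx3.symm

theorem sq_sum_le_mul_mul_of_le_mul {ι : Type*} (s : Finset ι) {a b c : ι → ℝ} {A B C : ℝ}
    (ha : ∀ x ∈ s, 0 ≤ a x) (hb : ∀ x, 0 ≤ b x) (hc : ∀ x, 0 ≤ c x) (hA : 0 ≤ A)
    (haA : ∀ x ∈ s, a x ≤ A) (habc : ∀ x ∈ s, a x ≤ b x * c x)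
    (hB : ∑ x ∈ s, b x ≤ B) (hC : ∑ x ∈ s, c x ≤ C) :
    (∑ x ∈ s, a x) ^ 2 ≤ A * B * C := by
  have hslice : ∀ x ∈ s, a x ≤ √A * (√(b x) * √(c x)) := fun x hx => by
    rw [← Real.sqrt_mul (hb x), ← Real.sqrt_mul hA]
    exact Real.le_sqrt_of_sq_le (by nlinarith [ha x hx, haA x hx, habc x hx])
  have hB0 : 0 ≤ B := (sum_nonneg fun x _ => hb x).trans hB
  have hsum : ∑ x ∈ s, a x ≤ √(A * B * C) := by
    calc ∑ x ∈ s, a x ≤ √A * ∑ x ∈ s, √(b x) * √(c x) := by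
          rw [mul_sum]; exact sum_le_sum hslice
      _ ≤ √A * (√(∑ x ∈ s, b x) * √(∑ x ∈ s, c x)) := by
          gcongr; exact Real.sum_sqrt_mul_sqrt_le s hb hc
      _ ≤ √A * (√B * √C) := by gcongr
      _ = √(A * B * C) := by rw [Real.sqrt_mul (mul_nonneg hA hB0), Real.sqrt_mul hA]; ring
  have hC0 : 0 ≤ C := (sum_nonneg fun x _ => hc x).trans hC
  exact (Real.le_sqrt (sum_nonneg ha) (by positivity)).1 hsum

theorem three_mul_rpow_two_thirds_le {s a b c : ℝ} (hs : 0 ≤ s) (ha : 0 ≤ a) (hb : 0 ≤ b)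
    (hc : 0 ≤ c) (h : s ^ 2 ≤ a * b * c) : 3 * s ^ ((2 : ℝ) / 3) ≤ a + b + c := by
  have hamgm := Real.geom_mean_le_arith_mean3_weighted (w₁ := 1 / 3) (w₂ := 1 / 3) (w₃ := 1 / 3)
    (by norm_num) (by norm_num) (by norm_num) ha hb hc (by norm_num)
  calc 3 * s ^ ((2 : ℝ) / 3) = 3 * (s ^ 2) ^ ((1 : ℝ) / 3) := by
        rw [← Real.rpow_natCast, ← Real.rpow_mul hs]; norm_num
    _ ≤ 3 * (a * b * c) ^ ((1 : ℝ) / 3) := by gcongr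
    _ = 3 * (a ^ ((1 : ℝ) / 3) * b ^ ((1 : ℝ) / 3) * c ^ ((1 : ℝ) / 3)) := by
        rw [Real.mul_rpow (by positivity) hc, Real.mul_rpow ha hb]
    _ ≤ a + b + c := by linarith

def IsGridStep {q d : ℕ} (i : Fin d) (u v : Fin d → Fin q) : Prop :=
  (v i : ℕ) = u i + 1 ∧ ∀ j ≠ i, u j = v j

theorem IsGridStep.right_unique {q d : ℕ} {i : Fin d} {u v w : Fin d → Fin q}
    (hv : IsGridStep i u v) (hw : IsGridStep i u w) : v = w := by
  funext j
  by_cases hj : j = i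
  · subst hj; exact Fin.ext (hv.1.trans hw.1.symm)
  · exact (hv.2 j hj).symm.trans (hw.2 j hj)

theorem enc_lt_enc {q d : ℕ} {u v : Fin d → Fin q} {i : Fin d} (hi : u i < v i)
    (hj : ∀ j ≠ i, u j = v j) : enc q d u < enc q d v := by
  refine sum_lt_sum (fun j _ => ?_) ⟨i, mem_univ i, ?_⟩
  · by_cases h : j = i
    · subst h; exact Nat.mul_le_mul_left _ hi.le
    · rw [hj j h]
  · exact Nat.mul_lt_mul_of_le_of_lt le_rfl hi (Nat.pow_pos (u i).pos)

theorem exists_isGridStep {q d : ℕ} (e : OEdge q d) : ∃ i, IsGridStep i e.1.1 e.1.2 := by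
  obtain ⟨⟨u, v⟩, hsum, henc⟩ := e
  dsimp only at hsum henc ⊢
  obtain ⟨i, -, hi⟩ := exists_ne_zero_of_sum_ne_zero (hsum.trans_ne one_ne_zero)
  have hfi : 1 ≤ |(u i : ℤ) - v i| := Int.one_le_abs (abs_ne_zero.1 hi)
  have hsplit := add_sum_erase univ (fun j => |(u j : ℤ) - v j|) (mem_univ i)
  have hnonneg := sum_nonneg (s := univ.erase i) fun j _ => abs_nonneg ((u j : ℤ) - v j)
  have hzero : ∀ j ≠ i, u j = v j := by
    intro j hj
    have := (sum_eq_zero_iff_of_nonneg fun j _ => abs_nonneg ((u j : ℤ) - v j)).1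
      (by linarith) j (mem_erase.2 ⟨hj, mem_univ j⟩)
    rw [abs_eq_zero, sub_eq_zero] at this
    exact Fin.ext (by exact_mod_cast this)
  refine ⟨i, ?_, hzero⟩
  rcases (abs_eq zero_le_one).1 (by linarith : |(u i : ℤ) - v i| = 1) with h | h
  · exact absurd henc (enc_lt_enc (Fin.lt_def.2 (by omega))
      fun j hj => (hzero j hj).symm).not_gt
  · omega

theorem Fin.eq_of_removeNth_eq {n : ℕ} {α : Type*} {i : Fin (n + 1)} {v w : Fin (n + 1) → α}
    (h : i.removeNth v = i.removeNth w) (hi : v i = w i) : v = w := by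
  rw [← Fin.insertNth_self_removeNth i v, ← Fin.insertNth_self_removeNth i w, h, hi]

theorem IsGridStep.removeNth_eq {q d : ℕ} {i : Fin (d + 1)} {u v : Fin (d + 1) → Fin q}
    (h : IsGridStep i u v) : i.removeNth u = i.removeNth v :=
  funext fun j => h.2 _ (Fin.succAbove_ne i j)

theorem card_add_card_image_removeNth_le {q d : ℕ} (S : Finset (Fin (d + 1) → Fin q))
    (i : Fin (d + 1)) (E : Finset (OEdge q (d + 1)))
    (hE : ∀ e ∈ E, e.1.1 ∈ S ∧ e.1.2 ∈ S ∧ IsGridStep i e.1.1 e.1.2) :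
    #E + #(S.image i.removeNth) ≤ #S := by
  classical
  -- the top vertex of each line of `S` in direction `i`
  set T := S.filter fun v => ∀ w ∈ S, i.removeNth w = i.removeNth v → w i ≤ v i
  have hTS : T ⊆ S := filter_subset _ _
  have hST : S.image i.removeNth ⊆ T.image i.removeNth := by
    intro p hp
    obtain ⟨v, hv, rfl⟩ := mem_image.1 hp
    obtain ⟨w, hw, hmax⟩ := exists_max_image (S.filter fun w => i.removeNth w = i.removeNth v)
      (fun w => w i) ⟨v, mem_filter.2 ⟨hv, rfl⟩⟩
    rw [mem_filter] at hw
    refine mem_image.2 ⟨w, mem_filter.2 ⟨hw.1, fun u hu huw => ?_⟩, hw.2⟩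
    exact hmax u (mem_filter.2 ⟨hu, huw.trans hw.2⟩)
  have hET : #E ≤ #(S \ T) := by
    refine card_le_card_of_injOn (fun e => e.1.1) (fun e he => ?_) fun e he e' he' hee => ?_
    · obtain ⟨h1, h2, hstep⟩ := hE e he
      refine mem_sdiff.2 ⟨h1, fun hT => ?_⟩
      have hle : e.1.2 i ≤ e.1.1 i := (mem_filter.1 hT).2 _ h2 hstep.removeNth_eq.symm
      rw [Fin.le_def, hstep.1] at hle
      omega
    · replace hee : e.1.1 = e'.1.1 := hee
      exact Subtype.ext (Prod.ext hee
        ((hE e he).2.2.right_unique (hee ▸ (hE e' he').2.2)))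
  have := card_le_card hST
  have := card_image_le (s := T) (f := i.removeNth)
  rw [card_sdiff_of_subset hTS] at hET
  have := card_le_card hTS
  omega

theorem sq_card_le_card_image_removeNth_mul {q : ℕ} (S : Finset (Fin 3 → Fin q)) :
    #S ^ 2 ≤ #(S.image (Fin.removeNth 0)) * #(S.image (Fin.removeNth 1)) *
      #(S.image (Fin.removeNth 2)) := by
  classical
  set slice : Fin q → Finset (Fin 3 → Fin q) := fun x => S.filter fun v => v 0 = x
  have hS : #S = ∑ x, #(slice x) := card_eq_sum_card_fiberwise fun v _ => mem_univ (v 0)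
  have hslice₀ : ∀ x, #(slice x) ≤ #(S.image (Fin.removeNth 0)) := fun x =>
    card_le_card_of_injOn (Fin.removeNth 0) (fun v hv => mem_image_of_mem _ (mem_filter.1 hv).1)
      fun v hv w hw h => Fin.eq_of_removeNth_eq h
        ((mem_filter.1 hv).2.trans (mem_filter.1 hw).2.symm)
  have hslice₁₂ : ∀ x, #(slice x) ≤
      #((slice x).image (Fin.removeNth 1)) * #((slice x).image (Fin.removeNth 2)) := by
    intro x
    rw [← card_product]
    refine card_le_card_of_injOn (fun v => (Fin.removeNth 1 v, Fin.removeNth 2 v))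
      (fun v hv => mem_product.2 ⟨mem_image_of_mem _ hv, mem_image_of_mem _ hv⟩)
      fun v _ w _ h => Fin.eq_of_removeNth_eq (Prod.ext_iff.1 h).2 ?_
    simpa [Fin.removeNth] using congrFun (Prod.ext_iff.1 h).1 1
  have hfiber : ∀ j : Fin 3, j ≠ 0 →
      ∑ x, #((slice x).image (Fin.removeNth j)) ≤ #(S.image (Fin.removeNth j)) := by
    intro j hj
    rw [card_eq_sum_card_fiberwise (f := fun w => w 0) (t := univ) fun w _ => mem_univ _]
    refine sum_le_sum fun x _ => card_le_card fun w hw => ?_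
    obtain ⟨v, hv, rfl⟩ := mem_image.1 hw
    rw [mem_filter] at hv ⊢
    exact ⟨mem_image_of_mem _ hv.1,
      by simp [Fin.removeNth, Fin.succAbove_ne_zero_zero hj, hv.2]⟩
  have := sq_sum_le_mul_mul_of_le_mul univ (a := fun x => (#(slice x) : ℝ))
    (b := fun x => (#((slice x).image (Fin.removeNth 1)) : ℝ))
    (c := fun x => (#((slice x).image (Fin.removeNth 2)) : ℝ))
    (B := #(S.image (Fin.removeNth 1))) (C := #(S.image (Fin.removeNth 2)))
    (fun _ _ => Nat.cast_nonneg _) (fun _ => Nat.cast_nonneg _) (fun _ => Nat.cast_nonneg _)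
    (Nat.cast_nonneg _) (fun x _ => by exact_mod_cast hslice₀ x)
    (fun x _ => by exact_mod_cast hslice₁₂ x)
    (by exact_mod_cast hfiber 1 (by decide)) (by exact_mod_cast hfiber 2 (by decide))
  rw [hS]
  exact_mod_cast this

theorem card_le_gridEdgeBound {q : ℕ} (S : Finset (Fin 3 → Fin q)) (E : Finset (OEdge q 3))
    (hE : ∀ e ∈ E, e.1.1 ∈ S ∧ e.1.2 ∈ S) : (#E : ℝ) ≤ gridEdgeBound #S := by
  classical
  have hcover : #E ≤ ∑ i : Fin 3, #(E.filter fun e => IsGridStep i e.1.1 e.1.2) := by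
    refine (card_le_card fun e he => ?_).trans card_biUnion_le
    obtain ⟨i, hi⟩ := exists_isGridStep e
    exact mem_biUnion.2 ⟨i, mem_univ i, mem_filter.2 ⟨he, hi⟩⟩
  have hline : ∀ i,
      #(E.filter fun e => IsGridStep i e.1.1 e.1.2) + #(S.image i.removeNth) ≤ #S := fun i =>
    card_add_card_image_removeNth_le S i _ fun e he => by
      rw [mem_filter] at he
      exact ⟨(hE e he.1).1, (hE e he.1).2, he.2⟩
  have hproj := three_mul_rpow_two_thirds_le (Nat.cast_nonneg #S) (Nat.cast_nonneg _)
    (Nat.cast_nonneg _) (Nat.cast_nonneg _)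
    (by exact_mod_cast sq_card_le_card_image_removeNth_mul S)
  rw [Fin.sum_univ_three] at hcover
  have htotal : (#E : ℝ) + (#(S.image (Fin.removeNth 0)) + #(S.image (Fin.removeNth 1)) +
      #(S.image (Fin.removeNth 2))) ≤ 3 * #S := by
    have := hline 0; have := hline 1; have := hline 2
    exact_mod_cast (by omega : _ ≤ 3 * #S)
  rw [gridEdgeBound]
  linarith

theorem SimpleGraph.natCard_connectedComponent_le {V : Type*} [Finite V] (G : SimpleGraph V) :
    Nat.card G.ConnectedComponent ≤ Nat.card V :=
  Nat.card_le_card_of_surjective _ fun c => c.ind fun v => ⟨v, rfl⟩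

def edgeGraph {q d : ℕ} (Λ : Finset (OEdge q d)) : SimpleGraph (Fin d → Fin q) :=
  SimpleGraph.fromRel fun u v => ∃ e ∈ Λ, e.1.1 = u ∧ e.1.2 = v

theorem edgeGraph_adj_of_mem {q d : ℕ} {Λ : Finset (OEdge q d)} {e : OEdge q d} (he : e ∈ Λ) :
    (edgeGraph Λ).Adj e.1.1 e.1.2 :=
  (SimpleGraph.fromRel_adj _ _ _).2
    ⟨fun h => e.2.2.ne (congrArg _ h), Or.inl ⟨e, he, rfl, rfl⟩⟩

theorem grad_mulVec_apply {q d : ℕ} (x : (Fin d → Fin q) → ℝ) (e : OEdge q d) :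
    (grad q d).mulVec x e = x e.1.2 - x e.1.1 := by
  have hne : e.1.1 ≠ e.1.2 := fun h => e.2.2.ne (congrArg _ h)
  have hrow : ∀ v, grad q d e v = (Pi.single e.1.2 1 - Pi.single e.1.1 1 : _ → ℝ) v := by
    intro v
    by_cases h2 : v = e.1.2
    · subst h2; simp [grad, hne.symm]
    · by_cases h1 : v = e.1.1 <;> simp [grad, h1, h2, hne]
  simp [Matrix.mulVec, dotProduct, hrow, sub_mul, sum_sub_distrib, Pi.single_apply]

theorem mem_Wgrad_iff {q d : ℕ} {Λ : Finset (OEdge q d)} {x : (Fin d → Fin q) → ℝ} :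
    x ∈ Wgrad q d Λ ↔ ∀ e ∈ Λ, x e.1.1 = x e.1.2 := by
  simp only [Wgrad, Submodule.mem_iInf, LinearMap.mem_ker, LinearMap.comp_apply,
    LinearMap.proj_apply, Matrix.mulVecLin_apply, grad_mulVec_apply, sub_eq_zero, eq_comm]

theorem finrank_Wgrad {q d : ℕ} (Λ : Finset (OEdge q d)) :
    Module.finrank ℝ (Wgrad q d Λ) = Nat.card (edgeGraph Λ).ConnectedComponent := by
  classical
  have hker : Wgrad q d Λ = LinearMap.ker (Matrix.toLin' ((edgeGraph Λ).lapMatrix ℝ)) := by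
    ext x
    rw [mem_Wgrad_iff, LinearMap.mem_ker, Matrix.toLin'_apply,
      SimpleGraph.lapMatrix_mulVec_eq_zero_iff_forall_adj]
    refine ⟨?_, fun h e he => h _ _ (edgeGraph_adj_of_mem he)⟩
    rintro h u v ⟨-, ⟨e, he, rfl, rfl⟩ | ⟨e, he, rfl, rfl⟩⟩
    · exact h e he
    · exact (h e he).symm
  rw [hker, ← SimpleGraph.card_connectedComponent_eq_finrank_ker_toLin'_lapMatrix,
    Nat.card_eq_fintype_card]

theorem card_le_gridEdgeBound_card_connectedComponent {q : ℕ} (Λ : Finset (OEdge q 3)) :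
    (#Λ : ℝ) ≤ gridEdgeBound (q ^ 3 - Nat.card (edgeGraph Λ).ConnectedComponent + 1) := by
  classical
  set G := edgeGraph Λ
  set comp : G.ConnectedComponent → Finset (Fin 3 → Fin q) :=
    fun c => univ.filter fun v => G.connectedComponentMk v = c
  have hΛ : #Λ = ∑ c, #(Λ.filter fun e => G.connectedComponentMk e.1.1 = c) :=
    card_eq_sum_card_fiberwise fun _ _ => mem_univ _
  have hV : (q : ℝ) ^ 3 = ∑ c, (#(comp c) : ℝ) := by
    have : #(univ : Finset (Fin 3 → Fin q)) = ∑ c, #(comp c) :=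
      card_eq_sum_card_fiberwise fun _ _ => mem_univ _
    simp only [card_univ, Fintype.card_fun, Fintype.card_fin] at this
    exact_mod_cast this
  have hne : ∀ c, 1 ≤ #(comp c) := fun c => c.ind fun v => card_pos.2 ⟨v, by simp [comp]⟩
  have hcomp : ∀ c, (#(Λ.filter fun e => G.connectedComponentMk e.1.1 = c) : ℝ) ≤
      gridEdgeBound #(comp c) := fun c =>
    card_le_gridEdgeBound _ _ fun e he => by
      rw [mem_filter] at he
      simpa [comp, ← he.2] using (edgeGraph_adj_of_mem he.1).reachable.symm
  have := sum_le_gridEdgeBound univ (k := fun c => (#(comp c) : ℝ))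
    (fun c _ => by exact_mod_cast hne c) (fun c _ => hcomp c)
  convert this using 2
  · rw [hΛ]; push_cast; rfl
  · rw [sum_sub_distrib, hV, sum_const, card_univ, Nat.card_eq_fintype_card]
    simp

theorem natCard_connectedComponent_lt_of_gridEdgeBound_lt {q : ℕ} {Λ : Finset (OEdge q 3)}
    {x : ℝ} (hx : gridEdgeBound x < #Λ) :
    (Nat.card (edgeGraph Λ).ConnectedComponent : ℝ) < q ^ 3 - x + 1 := by
  have hc : (Nat.card (edgeGraph Λ).ConnectedComponent : ℝ) ≤ q ^ 3 := by
    exact_mod_cast (edgeGraph Λ).natCard_connectedComponent_le.trans_eq (by simp)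
  by_contra! h
  have := gridEdgeBound_monotoneOn (Set.mem_Ici.2 (by linarith)) (Set.mem_Ici.2 (by linarith))
    (by linarith : q ^ 3 - Nat.card (edgeGraph Λ).ConnectedComponent + 1 ≤ x)
  linarith [card_le_gridEdgeBound_card_connectedComponent Λ]

theorem stmt_12_general (q : ℕ) (ℓ : ℕ) (hl : 54 < ℓ)
    (m : ℕ)
    (hm : (m : ℝ) ≥ (q : ℝ) ^ 3 - (1 / 3) * ((ℓ : ℝ) + (3 * (ℓ : ℝ) ^ 2) ^ ((1 : ℝ) / 3) +
      2 * ((ℓ : ℝ) / 3) ^ ((1 : ℝ) / 3) - 2)) :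
    kappaGrad q 3 ℓ ≤ m := by
  refine Finset.sup_le fun Λ hΛ => ?_
  rw [finrank_Wgrad]
  have hℓΛ : (ℓ : ℝ) ≤ #Λ := by exact_mod_cast (mem_filter.1 hΛ).2
  have hthreshold := gridEdgeBound_threshold_lt (x := ℓ) (by exact_mod_cast (by omega : 3 ≤ ℓ))
  have hcomp := natCard_connectedComponent_lt_of_gridEdgeBound_lt (hthreshold.trans_le hℓΛ)
  have : (Nat.card (edgeGraph Λ).ConnectedComponent : ℝ) < m + 1 := by linarith
  exact Nat.lt_succ_iff.1 (by exact_mod_cast this)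

/-- 3D, known cosupport: if `m ≥ n − (1/3)(ℓ + (3ℓ²)^{1/3} + 2(ℓ/3)^{1/3} − 2)` with
`n = q³`, then `κ_∇(ℓ) ≤ m`, i.e. `m` measurements meet the known-cosupport uniqueness
criterion. -/
theorem stmt_12 (q : ℕ) (hq : 3 ≤ q) (ℓ : ℕ) (hl : 54 < ℓ) (hlp : ℓ ≤ 3 * q ^ 2 * (q - 1))
    (m : ℕ)
    (hm : (m : ℝ) ≥ (q : ℝ) ^ 3 - (1 / 3) * ((ℓ : ℝ) + (3 * (ℓ : ℝ) ^ 2) ^ ((1 : ℝ) / 3) +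
      2 * ((ℓ : ℝ) / 3) ^ ((1 : ℝ) / 3) - 2)) :
    kappaGrad q 3 ℓ ≤ m :=
  stmt_12_general q ℓ hl m hm
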